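/- arXiv:2310.10162 — 4 statements merged into one kernel-verified Lean document; each statement's English description precedes it below -/
import Mathlib

section
/- Let π₁, π₂, π₃ and σ₁, σ₂, σ₃ be permutations of 𝔽₂^m, each triple satisfying the (𝒜ₘ) property, i.e., π₄ := π₁ + π₂ + π₃ is a permutation with π₄⁻¹ = π₁⁻¹ + π₂⁻¹ + π₃⁻¹, and similarly σ₄ := σ₁ + σ₂ + σ₃ is a permutation with σ₄⁻¹ = σ₁⁻¹ + σ₂⁻¹ + σ₃⁻¹. Define φᵢ on 𝔽₂^m × 𝔽₂ by φᵢ(y, 1) = (πᵢ(y), 1) and φᵢ(y, 0) = (σᵢ(y), 0) for i = 1, 2, 3. Then φ₁, φ₂, φ₃ are permutations of 𝔽₂^{m+1} satisfying the (𝒜_{m+1}) property: φ₁ + φ₂ + φ₃ is a permutation and (φ₁ + φ₂ + φ₃)⁻¹ = φ₁⁻¹ + φ₂⁻¹ + φ₃⁻¹. -/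
/-- Three permutations `π₁, π₂, π₃` of an additive group have the `(𝒜ₘ)` property if their
pointwise sum is a bijection and the pointwise sum of their inverses is a (two-sided)
inverse of it. -/
def PropA {V : Type*} [Add V] (π₁ π₂ π₃ : Equiv.Perm V) : Prop :=
  Function.Bijective (fun y => π₁ y + π₂ y + π₃ y) ∧
  (∀ y : V, (fun y => π₁ y + π₂ y + π₃ y)
      (π₁.symm y + π₂.symm y + π₃.symm y) = y) ∧
  (∀ y : V, π₁.symm ((fun y => π₁ y + π₂ y + π₃ y) y)
      + π₂.symm ((fun y => π₁ y + π₂ y + π₃ y) y)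
      + π₃.symm ((fun y => π₁ y + π₂ y + π₃ y) y) = y)

lemma aux_symm {m : ℕ} (π σ : Equiv.Perm (Fin m → ZMod 2))
    (φ : Equiv.Perm ((Fin m → ZMod 2) × ZMod 2))
    (hφ : ∀ (y : Fin m → ZMod 2) (b : ZMod 2),
      φ (y, b) = (if b = 1 then π y else σ y, b)) :
    ∀ (y : Fin m → ZMod 2) (b : ZMod 2),
      φ.symm (y, b) = (if b = 1 then π.symm y else σ.symm y, b) := by
  intro y b
  rw [Equiv.symm_apply_eq, hφ]
  by_cases hb : b = 1 <;> simp [hb]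

/-- the piecewise permutations `φᵢ` built from two `(𝒜ₘ)`-triples satisfy the
`(𝒜_{m+1})` property. -/
theorem stmt_1 (m : ℕ) (π₁ π₂ π₃ σ₁ σ₂ σ₃ : Equiv.Perm (Fin m → ZMod 2))
    (hπ : PropA π₁ π₂ π₃) (hσ : PropA σ₁ σ₂ σ₃)
    (φ₁ φ₂ φ₃ : Equiv.Perm ((Fin m → ZMod 2) × ZMod 2))
    (hφ₁ : ∀ (y : Fin m → ZMod 2) (b : ZMod 2),
      φ₁ (y, b) = (if b = 1 then π₁ y else σ₁ y, b))
    (hφ₂ : ∀ (y : Fin m → ZMod 2) (b : ZMod 2),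
      φ₂ (y, b) = (if b = 1 then π₂ y else σ₂ y, b))
    (hφ₃ : ∀ (y : Fin m → ZMod 2) (b : ZMod 2),
      φ₃ (y, b) = (if b = 1 then π₃ y else σ₃ y, b)) :
    PropA φ₁ φ₂ φ₃ := by
  have hs₁ := aux_symm π₁ σ₁ φ₁ hφ₁
  have hs₂ := aux_symm π₂ σ₂ φ₂ hφ₂
  have hs₃ := aux_symm π₃ σ₃ φ₃ hφ₃
  obtain ⟨hπb, hπr, hπl⟩ := hπ
  obtain ⟨hσb, hσr, hσl⟩ := hσ
  simp only at hπr hπl hσr hσl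
  have hb3 : ∀ b : ZMod 2, b + b + b = b := by decide
  have hf : ∀ (y : Fin m → ZMod 2) (b : ZMod 2), φ₁ (y, b) + φ₂ (y, b) + φ₃ (y, b)
      = (if b = 1 then π₁ y + π₂ y + π₃ y else σ₁ y + σ₂ y + σ₃ y, b) := by
    intro y b
    rw [hφ₁, hφ₂, hφ₃]
    by_cases hb : b = 1 <;> simp [hb, Prod.ext_iff, hb3]
  have hg : ∀ (y : Fin m → ZMod 2) (b : ZMod 2),
      φ₁.symm (y, b) + φ₂.symm (y, b) + φ₃.symm (y, b)
      = (if b = 1 then π₁.symm y + π₂.symm y + π₃.symm y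
          else σ₁.symm y + σ₂.symm y + σ₃.symm y, b) := by
    intro y b
    rw [hs₁, hs₂, hs₃]
    by_cases hb : b = 1 <;> simp [hb, Prod.ext_iff, hb3]
  refine ⟨?_, ?_, ?_⟩
  · rw [Function.bijective_iff_has_inverse]
    refine ⟨fun p => φ₁.symm p + φ₂.symm p + φ₃.symm p, ?_, ?_⟩
    · rintro ⟨y, b⟩
      simp only [hf, hg]
      by_cases hb : b = 1 <;> simp [hb, hπl, hσl]
    · rintro ⟨y, b⟩
      simp only [hg, hf]
      by_cases hb : b = 1 <;> simp [hb, hπr, hσr]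
  · rintro ⟨y, b⟩
    simp only [hg, hf]
    by_cases hb : b = 1 <;> simp [hb, hπr, hσr]
  · rintro ⟨y, b⟩
    simp only [hf, hg]
    by_cases hb : b = 1 <;> simp [hb, hπl, hσl]
end

section
/- Let n = 2m and define fᵢ(x, y) = Tr(x·πᵢ(y)) + hᵢ(y) for i = 1, 2, 3 on 𝔽_{2^m} × 𝔽_{2^m}, where π₁, π₂, π₃ are permutations of 𝔽_{2^m} with the (𝒜ₘ) property, and let s : 𝔽_{2^m} → 𝔽₂. Define f₄ = f₁ + f₂ + f₃ + s (so h₄ = h₁ + h₂ + h₃ + s). If h₁(π₁⁻¹(x)) + h₂(π₂⁻¹(x)) + h₃(π₃⁻¹(x)) + h₄((π₁+π₂+π₃)⁻¹(x)) = 1 for all x, then f₁* + f₂* + f₃* + f₄* = 1, where fᵢ* denotes the dual bent function, and consequently the concatenation f = f₁‖f₂‖f₃‖f₄ is a bent function on 𝔽₂^{n+2}. -/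
/-- Absolute trace of `𝔽_{2^m}` to `𝔽₂`. -/
noncomputable def Tr (m : ℕ) (x : GaloisField 2 m) : ZMod 2 :=
  Algebra.trace (ZMod 2) (GaloisField 2 m) x

lemma Tr_add (m : ℕ) (a b : GaloisField 2 m) : Tr m (a + b) = Tr m a + Tr m b :=
  map_add (Algebra.trace (ZMod 2) (GaloisField 2 m)) a b

lemma Tr_zero (m : ℕ) : Tr m (0 : GaloisField 2 m) = 0 :=
  map_zero (Algebra.trace (ZMod 2) (GaloisField 2 m))

lemma neg1_add (u v : ZMod 2) : (-1:ℤ)^((u+v).val) = (-1)^u.val * (-1)^v.val := by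
  revert u v; decide

lemma neg1_one_add (u : ZMod 2) : (-1:ℤ)^((1+u).val) = -(-1)^u.val := by
  revert u; decide

lemma zmod2_eq_of_pow (u v : ZMod 2) (h : (-1:ℤ)^u.val = (-1)^v.val) : u = v := by
  revert u v; decide

lemma char_sum_zero (m : ℕ) (hm : 0 < m) :
    letI := Fintype.ofFinite (GaloisField 2 m)
    ∑ x : GaloisField 2 m, (-1:ℤ)^((Tr m (x * 0)).val) = 2^m := by
  letI := Fintype.ofFinite (GaloisField 2 m)
  simp only [mul_zero, Tr_zero, ZMod.val_zero, pow_zero, Finset.sum_const, nsmul_eq_mul,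
    mul_one]
  rw [Finset.card_univ, ← Nat.card_eq_fintype_card, GaloisField.card 2 m hm.ne']
  push_cast; ring

lemma char_sum_ne (m : ℕ) (c : GaloisField 2 m) (hc : c ≠ 0) :
    letI := Fintype.ofFinite (GaloisField 2 m)
    ∑ x : GaloisField 2 m, (-1:ℤ)^((Tr m (x * c)).val) = 0 := by
  letI := Fintype.ofFinite (GaloisField 2 m)
  obtain ⟨x₀, hx₀⟩ : ∃ x₀, Tr m (x₀ * c) = 1 := by
    by_contra hno
    push_neg at hno
    refine hc ((traceForm_nondegenerate (ZMod 2) (GaloisField 2 m)).1 c fun y => ?_)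
    rw [Algebra.traceForm_apply]
    have h2 : ∀ u : ZMod 2, u ≠ 1 → u = 0 := by decide
    have := h2 _ (hno y)
    rwa [Tr, mul_comm] at this
  have hre : ∑ x : GaloisField 2 m, (-1:ℤ)^((Tr m ((x₀ + x) * c)).val)
      = ∑ x : GaloisField 2 m, (-1:ℤ)^((Tr m (x * c)).val) :=
    Fintype.sum_equiv (Equiv.addLeft x₀) _ _ (fun x => rfl)
  have hneg : ∀ x : GaloisField 2 m,
      (-1:ℤ)^((Tr m ((x₀ + x) * c)).val) = -(-1:ℤ)^((Tr m (x * c)).val) := by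
    intro x
    rw [add_mul, Tr_add, hx₀, neg1_one_add]
  rw [Finset.sum_congr rfl (fun x _ => hneg x), Finset.sum_neg_distrib] at hre
  linarith

/-- Walsh–Hadamard transform on `𝔽_{2^m} × 𝔽_{2^m}`, with inner product
`(x,y)·(a,b) = Tr(xa) + Tr(yb)`. -/
noncomputable def W2 (m : ℕ) (f : GaloisField 2 m × GaloisField 2 m → ZMod 2)
    (a : GaloisField 2 m × GaloisField 2 m) : ℤ :=
  letI := Fintype.ofFinite (GaloisField 2 m)
  ∑ x : GaloisField 2 m × GaloisField 2 m,
    (-1 : ℤ) ^ ((f x + Tr m (x.1 * a.1) + Tr m (x.2 * a.2)).val)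

/-- Walsh–Hadamard transform on `(𝔽_{2^m} × 𝔽_{2^m}) × 𝔽₂ × 𝔽₂`. -/
noncomputable def W4 (m : ℕ)
    (f : (GaloisField 2 m × GaloisField 2 m) × ZMod 2 × ZMod 2 → ZMod 2)
    (a : (GaloisField 2 m × GaloisField 2 m) × ZMod 2 × ZMod 2) : ℤ :=
  letI := Fintype.ofFinite (GaloisField 2 m)
  ∑ x : (GaloisField 2 m × GaloisField 2 m) × ZMod 2 × ZMod 2,
    (-1 : ℤ) ^ ((f x + Tr m (x.1.1 * a.1.1) + Tr m (x.1.2 * a.1.2)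
      + x.2.1 * a.2.1 + x.2.2 * a.2.2).val)

lemma W2_MM (m : ℕ) (hm : 0 < m) (π : Equiv.Perm (GaloisField 2 m))
    (h : GaloisField 2 m → ZMod 2) (f : GaloisField 2 m × GaloisField 2 m → ZMod 2)
    (hfd : ∀ x y, f (x, y) = Tr m (x * π y) + h y)
    (a : GaloisField 2 m × GaloisField 2 m) :
    W2 m f a = 2 ^ m * (-1 : ℤ) ^ ((h (π.symm a.1) + Tr m (π.symm a.1 * a.2)).val) := by
  letI := Fintype.ofFinite (GaloisField 2 m)
  have key : ∀ x y : GaloisField 2 m,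
      (-1:ℤ) ^ ((f (x, y) + Tr m (x * a.1) + Tr m (y * a.2)).val)
      = (-1:ℤ) ^ ((Tr m (x * (π y + a.1))).val) * (-1:ℤ) ^ ((h y + Tr m (y * a.2)).val) := by
    intro x y
    rw [← neg1_add]
    congr 2
    rw [hfd, mul_add, Tr_add]
    ring
  have step1 : W2 m f a = ∑ y : GaloisField 2 m,
      (∑ x : GaloisField 2 m, (-1:ℤ) ^ ((Tr m (x * (π y + a.1))).val))
        * (-1:ℤ) ^ ((h y + Tr m (y * a.2)).val) := by
    unfold W2
    rw [Fintype.sum_prod_type, Finset.sum_comm]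
    exact Finset.sum_congr rfl fun y _ => by
      rw [Finset.sum_mul]
      exact Finset.sum_congr rfl fun x _ => key x y
  rw [step1]
  rw [Finset.sum_eq_single (π.symm a.1)]
  · have h0 : π (π.symm a.1) + a.1 = 0 := by
      rw [Equiv.apply_symm_apply, CharTwo.add_self_eq_zero]
    rw [h0, char_sum_zero m hm]
  · intro y _ hy
    have hne : π y + a.1 ≠ 0 := by
      intro h0
      apply hy
      rw [Equiv.eq_symm_apply]
      rwa [add_eq_zero_iff_eq_neg, CharTwo.neg_eq] at h0
    rw [char_sum_ne m _ hne, zero_mul]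
  · intro hmem
    exact absurd (Finset.mem_univ _) hmem

lemma sum_zmod2 {M : Type*} [AddCommMonoid M] (g : ZMod 2 → M) :
    ∑ x : ZMod 2, g x = g 0 + g 1 := Fin.sum_univ_two g

lemma sum_zmod2_sq {M : Type*} [AddCommMonoid M] (g : ZMod 2 × ZMod 2 → M) :
    ∑ p : ZMod 2 × ZMod 2, g p = g (0,0) + g (0,1) + (g (1,0) + g (1,1)) := by
  rw [Fintype.sum_prod_type, sum_zmod2 (fun e₁ => ∑ e₂ : ZMod 2, g (e₁, e₂)),
    sum_zmod2 (fun e₂ => g (0, e₂)), sum_zmod2 (fun e₂ => g (1, e₂))]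

lemma cancel2m (m : ℕ) (u v : ZMod 2) (h : (2:ℤ)^m * (-1)^u.val = 2^m * (-1)^v.val) :
    u = v := by
  have h2 : (2:ℤ)^m ≠ 0 := by positivity
  exact zmod2_eq_of_pow u v (mul_left_cancel₀ h2 h)

lemma four_signs (v₁ v₂ v₃ v₄ : ZMod 2) (h : v₁+v₂+v₃+v₄ = 1) :
    (-1:ℤ)^v₁.val + (-1)^v₂.val + (-1)^v₃.val + (-1)^v₄.val = 2 ∨
    (-1:ℤ)^v₁.val + (-1)^v₂.val + (-1)^v₃.val + (-1)^v₄.val = -2 := by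
  revert v₁ v₂ v₃ v₄; decide

/-- if the `hᵢ` satisfy the condition (8), then the duals of the four
Maiorana–McFarland bent functions sum to `1`, and the concatenation is bent. -/
theorem stmt_3 (m : ℕ) (hm : 0 < m)
    (π₁ π₂ π₃ π₄ : Equiv.Perm (GaloisField 2 m))
    (hA : PropA π₁ π₂ π₃)
    (hπ₄ : ∀ y, π₄ y = π₁ y + π₂ y + π₃ y)
    (h₁ h₂ h₃ h₄ s : GaloisField 2 m → ZMod 2)
    (hh₄ : ∀ y, h₄ y = h₁ y + h₂ y + h₃ y + s y)
    (f₁ f₂ f₃ f₄ : GaloisField 2 m × GaloisField 2 m → ZMod 2)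
    (hf₁ : ∀ x y, f₁ (x, y) = Tr m (x * π₁ y) + h₁ y)
    (hf₂ : ∀ x y, f₂ (x, y) = Tr m (x * π₂ y) + h₂ y)
    (hf₃ : ∀ x y, f₃ (x, y) = Tr m (x * π₃ y) + h₃ y)
    (hf₄ : ∀ x y, f₄ (x, y) = f₁ (x, y) + f₂ (x, y) + f₃ (x, y) + s y)
    (hdual : ∀ x, h₁ (π₁.symm x) + h₂ (π₂.symm x) + h₃ (π₃.symm x) + h₄ (π₄.symm x) = 1)
    (f : (GaloisField 2 m × GaloisField 2 m) × ZMod 2 × ZMod 2 → ZMod 2)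
    (hf : ∀ z : GaloisField 2 m × GaloisField 2 m,
      f (z, 0, 0) = f₁ z ∧ f (z, 0, 1) = f₂ z ∧ f (z, 1, 0) = f₃ z ∧ f (z, 1, 1) = f₄ z) :
    (∀ g₁ g₂ g₃ g₄ : GaloisField 2 m × GaloisField 2 m → ZMod 2,
      (∀ a, W2 m f₁ a = 2 ^ m * (-1 : ℤ) ^ ((g₁ a).val)) →
      (∀ a, W2 m f₂ a = 2 ^ m * (-1 : ℤ) ^ ((g₂ a).val)) →
      (∀ a, W2 m f₃ a = 2 ^ m * (-1 : ℤ) ^ ((g₃ a).val)) →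
      (∀ a, W2 m f₄ a = 2 ^ m * (-1 : ℤ) ^ ((g₄ a).val)) →
      ∀ a, g₁ a + g₂ a + g₃ a + g₄ a = 1) ∧
    (∀ a, W4 m f a = 2 ^ (m + 1) ∨ W4 m f a = -(2 ^ (m + 1))) := by
  letI := Fintype.ofFinite (GaloisField 2 m)
  obtain ⟨hbij, hA2, hA3⟩ := hA
  have hsymm : ∀ x, π₁.symm x + π₂.symm x + π₃.symm x = π₄.symm x := by
    intro x
    have h1 := hA3 (π₄.symm x)
    simp only at h1
    rw [← hπ₄ (π₄.symm x), Equiv.apply_symm_apply] at h1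
    exact h1
  have hf₄' : ∀ x y, f₄ (x, y) = Tr m (x * π₄ y) + h₄ y := by
    intro x y
    rw [hf₄, hf₁, hf₂, hf₃, hh₄, hπ₄, mul_add, mul_add, Tr_add, Tr_add]
    ring
  have hW₁ : ∀ a, W2 m f₁ a
      = 2 ^ m * (-1 : ℤ) ^ ((h₁ (π₁.symm a.1) + Tr m (π₁.symm a.1 * a.2)).val) :=
    W2_MM m hm π₁ h₁ f₁ hf₁
  have hW₂ : ∀ a, W2 m f₂ a
      = 2 ^ m * (-1 : ℤ) ^ ((h₂ (π₂.symm a.1) + Tr m (π₂.symm a.1 * a.2)).val) :=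
    W2_MM m hm π₂ h₂ f₂ hf₂
  have hW₃ : ∀ a, W2 m f₃ a
      = 2 ^ m * (-1 : ℤ) ^ ((h₃ (π₃.symm a.1) + Tr m (π₃.symm a.1 * a.2)).val) :=
    W2_MM m hm π₃ h₃ f₃ hf₃
  have hW₄ : ∀ a, W2 m f₄ a
      = 2 ^ m * (-1 : ℤ) ^ ((h₄ (π₄.symm a.1) + Tr m (π₄.symm a.1 * a.2)).val) :=
    W2_MM m hm π₄ h₄ f₄ hf₄'
  have hGsum : ∀ a : GaloisField 2 m × GaloisField 2 m,
      (h₁ (π₁.symm a.1) + Tr m (π₁.symm a.1 * a.2))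
      + (h₂ (π₂.symm a.1) + Tr m (π₂.symm a.1 * a.2))
      + (h₃ (π₃.symm a.1) + Tr m (π₃.symm a.1 * a.2))
      + (h₄ (π₄.symm a.1) + Tr m (π₄.symm a.1 * a.2)) = 1 := by
    intro a
    have htr : Tr m (π₁.symm a.1 * a.2) + Tr m (π₂.symm a.1 * a.2)
        + Tr m (π₃.symm a.1 * a.2) + Tr m (π₄.symm a.1 * a.2) = 0 := by
      rw [← Tr_add, ← Tr_add, ← Tr_add, ← add_mul, ← add_mul, ← add_mul, hsymm,
        CharTwo.add_self_eq_zero, zero_mul, Tr_zero]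
    have hd := hdual a.1
    calc (h₁ (π₁.symm a.1) + Tr m (π₁.symm a.1 * a.2))
        + (h₂ (π₂.symm a.1) + Tr m (π₂.symm a.1 * a.2))
        + (h₃ (π₃.symm a.1) + Tr m (π₃.symm a.1 * a.2))
        + (h₄ (π₄.symm a.1) + Tr m (π₄.symm a.1 * a.2))
        = (h₁ (π₁.symm a.1) + h₂ (π₂.symm a.1) + h₃ (π₃.symm a.1) + h₄ (π₄.symm a.1))
          + (Tr m (π₁.symm a.1 * a.2) + Tr m (π₂.symm a.1 * a.2)
            + Tr m (π₃.symm a.1 * a.2) + Tr m (π₄.symm a.1 * a.2)) := by ring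
      _ = 1 + 0 := by rw [hd, htr]
      _ = 1 := by ring
  constructor
  · intro g₁ g₂ g₃ g₄ hg₁ hg₂ hg₃ hg₄ a
    have e1 := cancel2m m _ _ ((hg₁ a).symm.trans (hW₁ a))
    have e2 := cancel2m m _ _ ((hg₂ a).symm.trans (hW₂ a))
    have e3 := cancel2m m _ _ ((hg₃ a).symm.trans (hW₃ a))
    have e4 := cancel2m m _ _ ((hg₄ a).symm.trans (hW₄ a))
    rw [e1, e2, e3, e4]
    exact hGsum a
  · intro a
    have hsplit : W4 m f a
        = W2 m f₁ a.1 + (-1:ℤ)^(a.2.2.val) * W2 m f₂ a.1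
          + ((-1:ℤ)^(a.2.1.val) * W2 m f₃ a.1
            + (-1:ℤ)^((a.2.1 + a.2.2).val) * W2 m f₄ a.1) := by
      unfold W4
      rw [Fintype.sum_prod_type]
      have hz : ∀ z : GaloisField 2 m × GaloisField 2 m,
          (∑ p : ZMod 2 × ZMod 2, (-1:ℤ) ^ ((f (z, p) + Tr m (z.1 * a.1.1)
            + Tr m (z.2 * a.1.2) + p.1 * a.2.1 + p.2 * a.2.2).val))
          = (-1:ℤ) ^ ((f₁ z + Tr m (z.1 * a.1.1) + Tr m (z.2 * a.1.2)).val)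
            + (-1:ℤ)^(a.2.2.val)
              * (-1:ℤ) ^ ((f₂ z + Tr m (z.1 * a.1.1) + Tr m (z.2 * a.1.2)).val)
            + ((-1:ℤ)^(a.2.1.val)
              * (-1:ℤ) ^ ((f₃ z + Tr m (z.1 * a.1.1) + Tr m (z.2 * a.1.2)).val)
            + (-1:ℤ)^((a.2.1 + a.2.2).val)
              * (-1:ℤ) ^ ((f₄ z + Tr m (z.1 * a.1.1) + Tr m (z.2 * a.1.2)).val)) := by
        intro z
        obtain ⟨hz1, hz2, hz3, hz4⟩ := hf z
        rw [sum_zmod2_sq (fun p => (-1:ℤ) ^ ((f (z, p) + Tr m (z.1 * a.1.1)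
            + Tr m (z.2 * a.1.2) + p.1 * a.2.1 + p.2 * a.2.2).val))]
        have t1 : f (z, ((0:ZMod 2), (0:ZMod 2))) + Tr m (z.1 * a.1.1) + Tr m (z.2 * a.1.2)
            + (0:ZMod 2) * a.2.1 + (0:ZMod 2) * a.2.2
            = f₁ z + Tr m (z.1 * a.1.1) + Tr m (z.2 * a.1.2) := by rw [hz1]; ring
        have t2 : f (z, ((0:ZMod 2), (1:ZMod 2))) + Tr m (z.1 * a.1.1) + Tr m (z.2 * a.1.2)
            + (0:ZMod 2) * a.2.1 + (1:ZMod 2) * a.2.2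
            = a.2.2 + (f₂ z + Tr m (z.1 * a.1.1) + Tr m (z.2 * a.1.2)) := by rw [hz2]; ring
        have t3 : f (z, ((1:ZMod 2), (0:ZMod 2))) + Tr m (z.1 * a.1.1) + Tr m (z.2 * a.1.2)
            + (1:ZMod 2) * a.2.1 + (0:ZMod 2) * a.2.2
            = a.2.1 + (f₃ z + Tr m (z.1 * a.1.1) + Tr m (z.2 * a.1.2)) := by rw [hz3]; ring
        have t4 : f (z, ((1:ZMod 2), (1:ZMod 2))) + Tr m (z.1 * a.1.1) + Tr m (z.2 * a.1.2)
            + (1:ZMod 2) * a.2.1 + (1:ZMod 2) * a.2.2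
            = (a.2.1 + a.2.2) + (f₄ z + Tr m (z.1 * a.1.1) + Tr m (z.2 * a.1.2)) := by
          rw [hz4]; ring
        show (-1:ℤ) ^ ((f (z, ((0:ZMod 2), (0:ZMod 2))) + Tr m (z.1 * a.1.1)
              + Tr m (z.2 * a.1.2) + (0:ZMod 2) * a.2.1 + (0:ZMod 2) * a.2.2).val)
            + (-1:ℤ) ^ ((f (z, ((0:ZMod 2), (1:ZMod 2))) + Tr m (z.1 * a.1.1)
              + Tr m (z.2 * a.1.2) + (0:ZMod 2) * a.2.1 + (1:ZMod 2) * a.2.2).val)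
            + ((-1:ℤ) ^ ((f (z, ((1:ZMod 2), (0:ZMod 2))) + Tr m (z.1 * a.1.1)
              + Tr m (z.2 * a.1.2) + (1:ZMod 2) * a.2.1 + (0:ZMod 2) * a.2.2).val)
            + (-1:ℤ) ^ ((f (z, ((1:ZMod 2), (1:ZMod 2))) + Tr m (z.1 * a.1.1)
              + Tr m (z.2 * a.1.2) + (1:ZMod 2) * a.2.1 + (1:ZMod 2) * a.2.2).val)) = _
        rw [t1, t2, t3, t4]
        conv_lhs => rw [neg1_add a.2.2, neg1_add a.2.1, neg1_add (a.2.1 + a.2.2)]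
      rw [Finset.sum_congr rfl (fun z _ => hz z), Finset.sum_add_distrib,
        Finset.sum_add_distrib, Finset.sum_add_distrib, ← Finset.mul_sum, ← Finset.mul_sum,
        ← Finset.mul_sum]
      rfl
    rw [hsplit, hW₁ a.1, hW₂ a.1, hW₃ a.1, hW₄ a.1]
    have hv := four_signs
      (h₁ (π₁.symm a.1.1) + Tr m (π₁.symm a.1.1 * a.1.2))
      (h₂ (π₂.symm a.1.1) + Tr m (π₂.symm a.1.1 * a.1.2) + a.2.2)
      (h₃ (π₃.symm a.1.1) + Tr m (π₃.symm a.1.1 * a.1.2) + a.2.1)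
      (h₄ (π₄.symm a.1.1) + Tr m (π₄.symm a.1.1 * a.1.2) + (a.2.1 + a.2.2))
      (by
        have := hGsum a.1
        calc (h₁ (π₁.symm a.1.1) + Tr m (π₁.symm a.1.1 * a.1.2))
            + (h₂ (π₂.symm a.1.1) + Tr m (π₂.symm a.1.1 * a.1.2) + a.2.2)
            + (h₃ (π₃.symm a.1.1) + Tr m (π₃.symm a.1.1 * a.1.2) + a.2.1)
            + (h₄ (π₄.symm a.1.1) + Tr m (π₄.symm a.1.1 * a.1.2) + (a.2.1 + a.2.2))
            = ((h₁ (π₁.symm a.1.1) + Tr m (π₁.symm a.1.1 * a.1.2))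
              + (h₂ (π₂.symm a.1.1) + Tr m (π₂.symm a.1.1 * a.1.2))
              + (h₃ (π₃.symm a.1.1) + Tr m (π₃.symm a.1.1 * a.1.2))
              + (h₄ (π₄.symm a.1.1) + Tr m (π₄.symm a.1.1 * a.1.2)))
              + ((a.2.1 + a.2.1) + (a.2.2 + a.2.2)) := by ring
          _ = 1 := by
              rw [this, CharTwo.add_self_eq_zero, CharTwo.add_self_eq_zero]; ring)
    have expand : 2 ^ m * (-1:ℤ) ^ ((h₁ (π₁.symm a.1.1) + Tr m (π₁.symm a.1.1 * a.1.2)).val)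
        + (-1:ℤ)^(a.2.2.val) * (2 ^ m
          * (-1:ℤ) ^ ((h₂ (π₂.symm a.1.1) + Tr m (π₂.symm a.1.1 * a.1.2)).val))
        + ((-1:ℤ)^(a.2.1.val) * (2 ^ m
          * (-1:ℤ) ^ ((h₃ (π₃.symm a.1.1) + Tr m (π₃.symm a.1.1 * a.1.2)).val))
        + (-1:ℤ)^((a.2.1 + a.2.2).val) * (2 ^ m
          * (-1:ℤ) ^ ((h₄ (π₄.symm a.1.1) + Tr m (π₄.symm a.1.1 * a.1.2)).val)))
        = 2 ^ m * ((-1:ℤ) ^ ((h₁ (π₁.symm a.1.1) + Tr m (π₁.symm a.1.1 * a.1.2)).val)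
          + (-1:ℤ) ^ ((h₂ (π₂.symm a.1.1) + Tr m (π₂.symm a.1.1 * a.1.2) + a.2.2).val)
          + (-1:ℤ) ^ ((h₃ (π₃.symm a.1.1) + Tr m (π₃.symm a.1.1 * a.1.2) + a.2.1).val)
          + (-1:ℤ) ^ ((h₄ (π₄.symm a.1.1) + Tr m (π₄.symm a.1.1 * a.1.2)
            + (a.2.1 + a.2.2)).val)) := by
      rw [neg1_add (h₂ (π₂.symm a.1.1) + Tr m (π₂.symm a.1.1 * a.1.2)) a.2.2,
        neg1_add (h₃ (π₃.symm a.1.1) + Tr m (π₃.symm a.1.1 * a.1.2)) a.2.1,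
        neg1_add (h₄ (π₄.symm a.1.1) + Tr m (π₄.symm a.1.1 * a.1.2)) (a.2.1 + a.2.2)]
      ring
    rw [expand]
    rcases hv with hv | hv
    · left; rw [hv, pow_succ]
    · right; rw [hv, pow_succ]; ring
end

section
/- Let m ≥ 3, d² ≡ 1 (mod 2^m − 1), and α₁, α₂, α₃ ∈ 𝔽_{2^m}* pairwise distinct with αᵢ^{d+1} = 1 and α₄ := α₁ + α₂ + α₃ satisfying α₄^{d+1} = 1. Then the permutations πᵢ(y) = αᵢ y^d (i = 1, 2, 3) of 𝔽_{2^m} satisfy the (𝒜ₘ) property: π₄ := π₁ + π₂ + π₃ is a permutation (equal to y ↦ α₄ y^d) and π₄⁻¹ = π₁⁻¹ + π₂⁻¹ + π₃⁻¹. -/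
lemma pow_d2_eq (m d : ℕ) (hm : 3 ≤ m) (hd : d ^ 2 ≡ 1 [MOD 2 ^ m - 1])
    (y : GaloisField 2 m) : y ^ (d ^ 2) = y := by
  have hmne : m ≠ 0 := by omega
  have : Fintype (GaloisField 2 m) := Fintype.ofFinite _
  have hcard : Fintype.card (GaloisField 2 m) = 2 ^ m := by
    rw [← Nat.card_eq_fintype_card]; exact GaloisField.card 2 m hmne
  have h8 : (8:ℕ) ≤ 2 ^ m := by
    calc (8:ℕ) = 2 ^ 3 := rfl
    _ ≤ 2 ^ m := Nat.pow_le_pow_right (by norm_num) hm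
  have hgt : 1 < 2 ^ m - 1 := by omega
  have hmod : d ^ 2 % (2 ^ m - 1) = 1 := by
    have := hd
    unfold Nat.ModEq at this
    rwa [Nat.mod_eq_of_lt hgt] at this
  obtain ⟨q, hq⟩ : ∃ q, d ^ 2 = (2 ^ m - 1) * q + 1 := by
    refine ⟨d ^ 2 / (2 ^ m - 1), ?_⟩
    conv_lhs => rw [← Nat.div_add_mod (d ^ 2) (2 ^ m - 1)]
    rw [hmod]
  rcases eq_or_ne y 0 with rfl | hy
  · rw [zero_pow]; omega
  · have h1 : y ^ (2 ^ m - 1) = 1 := by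
      have := FiniteField.pow_card_sub_one_eq_one y hy
      rwa [hcard] at this
    rw [hq, pow_add, pow_mul, h1, one_pow, one_mul, pow_one]

/-- the monomial permutations `πᵢ(y) = αᵢ y^d` satisfy the `(𝒜ₘ)` property,
and their sum is `y ↦ α₄ y^d`. -/
theorem stmt_6 (m d : ℕ) (hm : 3 ≤ m) (hd : d ^ 2 ≡ 1 [MOD 2 ^ m - 1])
    (α₁ α₂ α₃ α₄ : GaloisField 2 m)
    (h1 : α₁ ≠ 0) (h2 : α₂ ≠ 0) (h3 : α₃ ≠ 0)
    (h12 : α₁ ≠ α₂) (h13 : α₁ ≠ α₃) (h23 : α₂ ≠ α₃)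
    (hα₄ : α₄ = α₁ + α₂ + α₃) (h4 : α₄ ≠ 0)
    (e1 : α₁ ^ (d + 1) = 1) (e2 : α₂ ^ (d + 1) = 1)
    (e3 : α₃ ^ (d + 1) = 1) (e4 : α₄ ^ (d + 1) = 1)
    (π₁ π₂ π₃ : Equiv.Perm (GaloisField 2 m))
    (hπ₁ : ∀ y, π₁ y = α₁ * y ^ d) (hπ₂ : ∀ y, π₂ y = α₂ * y ^ d)
    (hπ₃ : ∀ y, π₃ y = α₃ * y ^ d) :
    PropA π₁ π₂ π₃ ∧ (∀ y, π₁ y + π₂ y + π₃ y = α₄ * y ^ d) := by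
  -- general involution fact
  have key : ∀ α : GaloisField 2 m, α ^ (d + 1) = 1 →
      ∀ y, α * (α * y ^ d) ^ d = y := by
    intro α hα y
    rw [mul_pow, ← mul_assoc, ← pow_succ', hα, one_mul, ← pow_mul, ← pow_two,
      pow_d2_eq m d hm hd]
  have hsum : ∀ y, π₁ y + π₂ y + π₃ y = α₄ * y ^ d := by
    intro y; rw [hπ₁, hπ₂, hπ₃, hα₄]; ring
  have hsym : ∀ (π : Equiv.Perm (GaloisField 2 m)) (α : GaloisField 2 m),
      α ^ (d + 1) = 1 → (∀ y, π y = α * y ^ d) → ∀ y, π.symm y = π y := by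
    intro π α hα hπ y
    have : π (π y) = y := by rw [hπ (π y), hπ y]; exact key α hα y
    calc π.symm y = π.symm (π (π y)) := by rw [this]
    _ = π y := π.symm_apply_apply _
  have hs1 := hsym π₁ α₁ e1 hπ₁
  have hs2 := hsym π₂ α₂ e2 hπ₂
  have hs3 := hsym π₃ α₃ e3 hπ₃
  have hff : ∀ y, (fun y => π₁ y + π₂ y + π₃ y) ((fun y => π₁ y + π₂ y + π₃ y) y) = y := by
    intro y
    simp only [hsum]
    exact key α₄ e4 y
  refine ⟨⟨Function.Involutive.bijective hff, ?_, ?_⟩, hsum⟩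
  · intro y
    simp only [hs1, hs2, hs3]
    exact hff y
  · intro y
    simp only [hs1, hs2, hs3]
    exact hff y
end

section
/- Let α₁ = a, α₂ = a⁴, α₃ = a⁶ in 𝔽₈ = 𝔽₂[a]/(a³+a+1), α₄ = α₁+α₂+α₃ = 1, and d = 6. Then each αᵢ^{d+1} = 1, d² ≡ 1 (mod 7), the maps πᵢ(y) = αᵢ y⁶ are involutions of 𝔽₈, and π₁ + π₂ + π₃ = π₄ is a permutation with π₄⁻¹ = π₁⁻¹ + π₂⁻¹ + π₃⁻¹; i.e., π₁, π₂, π₃ satisfy the (𝒜₃) property. -/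
lemma gf8_pow8 (y : GaloisField 2 3) : y ^ 8 = y := by
  haveI : Fintype (GaloisField 2 3) := Fintype.ofFinite _
  have hc : Fintype.card (GaloisField 2 3) = 8 := by
    rw [← Nat.card_eq_fintype_card, GaloisField.card 2 3 (by norm_num)]; norm_num
  have := FiniteField.pow_card y
  rwa [hc] at this

lemma gf8_pow36 (y : GaloisField 2 3) : y ^ 36 = y := by
  have h8 := gf8_pow8 y
  calc y ^ 36 = (y ^ 8) ^ 4 * y ^ 4 := by ring
    _ = y ^ 4 * y ^ 4 := by rw [h8]
    _ = y ^ 8 := by ring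
    _ = y := h8

lemma gf8_two : (2 : GaloisField 2 3) = 0 := by
  have : CharP (GaloisField 2 3) 2 := inferInstance
  exact_mod_cast CharP.cast_eq_zero (GaloisField 2 3) 2

/-- the concrete example in `𝔽₈` with `α₁ = a`, `α₂ = a⁴`, `α₃ = a⁶`,
`d = 6`, yielding an `(𝒜₃)`-triple of involutions. -/
theorem stmt_15 (a : GaloisField 2 3) (ha : a ^ 3 + a + 1 = 0)
    (π₁ π₂ π₃ : Equiv.Perm (GaloisField 2 3))
    (hπ₁ : ∀ y, π₁ y = a * y ^ 6)
    (hπ₂ : ∀ y, π₂ y = a ^ 4 * y ^ 6)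
    (hπ₃ : ∀ y, π₃ y = a ^ 6 * y ^ 6) :
    a + a ^ 4 + a ^ 6 = 1 ∧
    a ^ 7 = 1 ∧ (a ^ 4) ^ 7 = 1 ∧ (a ^ 6) ^ 7 = 1 ∧ (a + a ^ 4 + a ^ 6) ^ 7 = 1 ∧
    6 ^ 2 ≡ 1 [MOD 7] ∧
    (∀ y : GaloisField 2 3, π₁ (π₁ y) = y) ∧
    (∀ y : GaloisField 2 3, π₂ (π₂ y) = y) ∧
    (∀ y : GaloisField 2 3, π₃ (π₃ y) = y) ∧
    (∀ y : GaloisField 2 3, (a + a ^ 4 + a ^ 6) * ((a + a ^ 4 + a ^ 6) * y ^ 6) ^ 6 = y) ∧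
    (∀ y : GaloisField 2 3, π₁ y + π₂ y + π₃ y = (a + a ^ 4 + a ^ 6) * y ^ 6) ∧
    PropA π₁ π₂ π₃ := by
  have h2 := gf8_two
  have hsum : a + a ^ 4 + a ^ 6 = 1 := by
    linear_combination (a ^ 3 - 1) * ha + a * h2
  have ha7 : a ^ 7 = 1 := by
    linear_combination (a ^ 4 - a ^ 2 - a + 1) * ha + (a ^ 2 - 1) * h2
  have inv1 : ∀ y : GaloisField 2 3, π₁ (π₁ y) = y := by
    intro y
    rw [hπ₁, hπ₁]
    have := gf8_pow36 y
    calc a * (a * y ^ 6) ^ 6 = a ^ 7 * y ^ 36 := by ring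
      _ = y := by rw [ha7, gf8_pow36]; ring
  have inv2 : ∀ y : GaloisField 2 3, π₂ (π₂ y) = y := by
    intro y
    rw [hπ₂, hπ₂]
    calc a ^ 4 * (a ^ 4 * y ^ 6) ^ 6 = (a ^ 7) ^ 4 * y ^ 36 := by ring
      _ = y := by rw [ha7, gf8_pow36]; ring
  have inv3 : ∀ y : GaloisField 2 3, π₃ (π₃ y) = y := by
    intro y
    rw [hπ₃, hπ₃]
    calc a ^ 6 * (a ^ 6 * y ^ 6) ^ 6 = (a ^ 7) ^ 6 * y ^ 36 := by ring
      _ = y := by rw [ha7, gf8_pow36]; ring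
  have hsum1 : ∀ y : GaloisField 2 3,
      (a + a ^ 4 + a ^ 6) * ((a + a ^ 4 + a ^ 6) * y ^ 6) ^ 6 = y := by
    intro y
    rw [hsum]
    calc (1 : GaloisField 2 3) * (1 * y ^ 6) ^ 6 = y ^ 36 := by ring
      _ = y := gf8_pow36 y
  have hpisum : ∀ y : GaloisField 2 3,
      π₁ y + π₂ y + π₃ y = (a + a ^ 4 + a ^ 6) * y ^ 6 := by
    intro y; rw [hπ₁, hπ₂, hπ₃]; ring
  have hf : ∀ y : GaloisField 2 3, π₁ y + π₂ y + π₃ y = y ^ 6 := by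
    intro y; rw [hpisum, hsum, one_mul]
  have hs1 : ∀ y, π₁.symm y = π₁ y := by
    intro y; conv_lhs => rw [← inv1 y, Equiv.symm_apply_apply]
  have hs2 : ∀ y, π₂.symm y = π₂ y := by
    intro y; conv_lhs => rw [← inv2 y, Equiv.symm_apply_apply]
  have hs3 : ∀ y, π₃.symm y = π₃ y := by
    intro y; conv_lhs => rw [← inv3 y, Equiv.symm_apply_apply]
  have hff : ∀ y : GaloisField 2 3, ((y : GaloisField 2 3) ^ 6) ^ 6 = y := by
    intro y
    calc (y ^ 6) ^ 6 = y ^ 36 := by ring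
      _ = y := gf8_pow36 y
  refine ⟨hsum, ha7, by rw [← pow_mul, mul_comm, pow_mul, ha7, one_pow],
    by rw [← pow_mul, mul_comm, pow_mul, ha7, one_pow],
    by rw [hsum, one_pow], by decide, inv1, inv2, inv3, hsum1, hpisum, ?_, ?_, ?_⟩
  · apply Function.bijective_iff_has_inverse.2
    refine ⟨fun y => y ^ 6, fun y => ?_, fun y => ?_⟩ <;> simp only [hf] <;> exact hff y
  · intro y
    simp only [hs1, hs2, hs3, hf]
    exact hff y
  · intro y
    simp only [hs1, hs2, hs3]
    rw [hf y, hπ₁, hπ₂, hπ₃]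
    have h36 := gf8_pow36 y
    calc a * (y ^ 6) ^ 6 + a ^ 4 * (y ^ 6) ^ 6 + a ^ 6 * (y ^ 6) ^ 6
        = (a + a ^ 4 + a ^ 6) * y ^ 36 := by ring
      _ = y := by rw [hsum, h36, one_mul]
end
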